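/- Let H_b ∈ ℂ^{N_r×N_t} and H_e ∈ ℂ^{N_e×N_t} be complex matrices such that Δ := H_bᴴH_b − H_eᴴH_e is positive semidefinite, and let X ∈ ℂ^{N_t×N_t} be Hermitian positive semidefinite. Define Y := I + Δ^{1/2} X Δ^{1/2} − Δ^{1/2} X H_eᴴ (I + H_e X H_eᴴ)^{-1} H_e X Δ^{1/2}. Then: (i) Y − I is positive semidefinite (in particular Y is Hermitian positive definite); (ii) the 2×2 block matrix [[I + Δ^{1/2} X Δ^{1/2} − Y, Δ^{1/2} X H_eᴴ], [H_e X Δ^{1/2}, I + H_e X H_eᴴ]] is positive semidefinite; and (iii) det Y = det(I + H_b X H_bᴴ) / det(I + H_e X H_eᴴ). -/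

import Mathlib

/-!
Write `S = Δ^{1/2}` and `D = I + H_e X H_eᴴ`. Then `Y - I = S X S - S X H_eᴴ D⁻¹ H_e X S` is the
Schur complement of `D` in the positive semidefinite block matrix
`[S; H_e] X [S; H_e]ᴴ + diag(0, I)`, and the block matrix of (ii) has Schur complement `0`.
For the determinant, the push-through identity `X - X H_eᴴ D⁻¹ H_e X = (I + X H_eᴴ H_e)⁻¹ X` and
Sylvester's identity `det (I + U V) = det (I + V U)` turn `det Y` into
`det ((I + X H_eᴴ H_e)⁻¹ (I + X H_bᴴ H_b))`, because `S² + H_eᴴ H_e = H_bᴴ H_b`.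
-/

open Matrix
open scoped ComplexOrder

namespace Matrix.PosSemidef

/-- The square root of a positive semidefinite matrix, as `Matrix.PosSemidef.sqrt` was defined
in the older Mathlib (removed since in favour of `CFC.sqrt`). -/
noncomputable def sqrt {n 𝕜 : Type*} [Fintype n] [RCLike 𝕜] [DecidableEq n] {A : Matrix n n 𝕜}
    (hA : PosSemidef A) : Matrix n n 𝕜 :=
  hA.1.eigenvectorUnitary.1 * diagonal ((↑) ∘ (√·) ∘ hA.1.eigenvalues) *
  (star hA.1.eigenvectorUnitary : Matrix n n 𝕜)

end Matrix.PosSemidef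

namespace Matrix

section CommRing

variable {R : Type*} [CommRing R] {n k : Type*} [Fintype n] [Fintype k] [DecidableEq n]
  [DecidableEq k]

lemma mul_inv_one_add_mul_comm (U : Matrix n k R) (V : Matrix k n R)
    (h : IsUnit (1 + V * U).det) : U * (1 + V * U)⁻¹ = (1 + U * V)⁻¹ * U := by
  have h' : IsUnit (1 + U * V).det := by rwa [det_one_add_mul_comm]
  have hcomm : (1 + U * V) * U = U * (1 + V * U) := by
    simp only [Matrix.add_mul, Matrix.mul_add, Matrix.one_mul, Matrix.mul_one, Matrix.mul_assoc]
  calc U * (1 + V * U)⁻¹ = (1 + U * V)⁻¹ * ((1 + U * V) * U) * (1 + V * U)⁻¹ := by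
        rw [← Matrix.mul_assoc, nonsing_inv_mul _ h', Matrix.one_mul]
    _ = (1 + U * V)⁻¹ * U := by
        rw [hcomm, Matrix.mul_assoc, Matrix.mul_assoc, mul_nonsing_inv _ h, Matrix.mul_one]

lemma sub_mul_inv_one_add_mul_mul (X : Matrix n n R) (W : Matrix n k R) (V : Matrix k n R)
    (h : IsUnit (1 + V * X * W).det) :
    X - X * W * (1 + V * X * W)⁻¹ * V * X = (1 + X * W * V)⁻¹ * X := by
  have h' : IsUnit (1 + X * W * V).det := by rwa [det_one_add_mul_comm, ← Matrix.mul_assoc]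
  rw [Matrix.mul_assoc V, mul_inv_one_add_mul_comm _ _ (by rwa [← Matrix.mul_assoc])]
  calc X - (1 + X * W * V)⁻¹ * (X * W) * V * X
      = (1 + X * W * V)⁻¹ * ((1 + X * W * V) - X * W * V) * X := by
        rw [Matrix.mul_sub, nonsing_inv_mul _ h', Matrix.sub_mul, Matrix.one_mul]
        simp only [Matrix.mul_assoc]
    _ = (1 + X * W * V)⁻¹ * X := by rw [add_sub_cancel_right, Matrix.mul_one]

end CommRing

section Field

variable {K : Type*} [Field K] [Star K] {m n k l : Type*} [Fintype m] [Fintype n] [Fintype k]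
  [Fintype l] [DecidableEq m] [DecidableEq n] [DecidableEq k] [DecidableEq l]

lemma det_one_add_mul_sub_mul_inv_mul_conjTranspose (X : Matrix n n K) (A : Matrix m n K)
    (B : Matrix k n K) (C : Matrix l n K) (hABC : Aᴴ * A + Bᴴ * B = Cᴴ * C)
    (hB : (1 + B * X * Bᴴ).det ≠ 0) :
    (1 + A * X * Aᴴ - A * X * Bᴴ * (1 + B * X * Bᴴ)⁻¹ * B * X * Aᴴ).det
      = (1 + C * X * Cᴴ).det / (1 + B * X * Bᴴ).det := by
  set P := 1 + X * Bᴴ * B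
  have hdetP : P.det = (1 + B * X * Bᴴ).det := by
    rw [det_one_add_mul_comm, Matrix.mul_assoc]
  have hP : IsUnit P.det := hdetP ▸ hB.isUnit
  have hY : 1 + A * X * Aᴴ - A * X * Bᴴ * (1 + B * X * Bᴴ)⁻¹ * B * X * Aᴴ
      = 1 + A * (P⁻¹ * X * Aᴴ) := by
    rw [← sub_mul_inv_one_add_mul_mul X Bᴴ B hB.isUnit]
    simp only [Matrix.mul_sub, Matrix.sub_mul, Matrix.mul_assoc]
    abel
  have hfactor : 1 + P⁻¹ * X * Aᴴ * A = P⁻¹ * (1 + X * Cᴴ * C) := by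
    calc 1 + P⁻¹ * X * Aᴴ * A = P⁻¹ * (P + X * (Aᴴ * A)) := by
          rw [Matrix.mul_add, nonsing_inv_mul _ hP]
          simp only [Matrix.mul_assoc]
      _ = P⁻¹ * (1 + X * Cᴴ * C) := by
          rw [Matrix.mul_assoc X, ← hABC]
          simp only [P, Matrix.mul_add, Matrix.mul_assoc]
          abel
  rw [hY, det_one_add_mul_comm, hfactor, det_mul, det_nonsing_inv, hdetP, Ring.inverse_eq_inv,
    det_one_add_mul_comm (X * Cᴴ), ← Matrix.mul_assoc, inv_mul_eq_div]

end Field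

namespace PosSemidef

section Sqrt

open scoped MatrixOrder

variable {𝕜 n : Type*} [RCLike 𝕜] [Fintype n] [DecidableEq n] {A : Matrix n n 𝕜}

lemma sqrt_eq_cfc_sqrt (hA : A.PosSemidef) : hA.sqrt = CFC.sqrt A := by
  rw [CFC.sqrt_eq_real_sqrt A hA.nonneg, cfcₙ_eq_cfc, hA.1.cfc_eq]
  rfl

lemma posSemidef_sqrt (hA : A.PosSemidef) : hA.sqrt.PosSemidef := by
  rw [sqrt_eq_cfc_sqrt]
  exact (CFC.sqrt_nonneg A).posSemidef

lemma sqrt_mul_self (hA : A.PosSemidef) : hA.sqrt * hA.sqrt = A := by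
  rw [sqrt_eq_cfc_sqrt]
  exact CFC.sqrt_mul_sqrt_self A hA.nonneg

end Sqrt

variable {𝕜 : Type*} [RCLike 𝕜] {m n k : Type*} [Fintype m] [Fintype n] [Fintype k]
  [DecidableEq k] {X : Matrix n n 𝕜}

lemma posDef_one_add_mul_mul_conjTranspose (hX : X.PosSemidef) (B : Matrix k n 𝕜) :
    (1 + B * X * Bᴴ).PosDef :=
  PosDef.one.add_posSemidef (hX.mul_mul_conjTranspose_same B)

lemma fromBlocks_mul_mul_conjTranspose_add_one (hX : X.PosSemidef) (A : Matrix m n 𝕜)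
    (B : Matrix k n 𝕜) :
    (fromBlocks (A * X * Aᴴ) (A * X * Bᴴ) (B * X * Aᴴ) (1 + B * X * Bᴴ)).PosSemidef := by
  have hAB : fromRows A B * X * (fromRows A B)ᴴ
      = fromBlocks (A * X * Aᴴ) (A * X * Bᴴ) (B * X * Aᴴ) (B * X * Bᴴ) := by
    rw [conjTranspose_fromRows_eq_fromCols_conjTranspose, fromRows_mul, fromRows_mul_fromCols]
  set F : Matrix (m ⊕ k) k 𝕜 := fromRows 0 1
  have hF : F * Fᴴ = fromBlocks 0 0 0 1 := by
    rw [conjTranspose_fromRows_eq_fromCols_conjTranspose, fromRows_mul_fromCols]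
    simp
  have hsum : fromBlocks (A * X * Aᴴ) (A * X * Bᴴ) (B * X * Aᴴ) (1 + B * X * Bᴴ)
      = fromRows A B * X * (fromRows A B)ᴴ + F * Fᴴ := by
    rw [hAB, hF, fromBlocks_add]
    simp [add_comm]
  rw [hsum]
  exact (hX.mul_mul_conjTranspose_same _).add (posSemidef_self_mul_conjTranspose _)

lemma mul_mul_conjTranspose_sub (hX : X.PosSemidef) (A : Matrix m n 𝕜) (B : Matrix k n 𝕜) :
    (A * X * Aᴴ - A * X * Bᴴ * (1 + B * X * Bᴴ)⁻¹ * B * X * Aᴴ).PosSemidef := by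
  have hD := hX.posDef_one_add_mul_mul_conjTranspose B
  have : Invertible (1 + B * X * Bᴴ) := hD.isUnit.invertible
  have hBA : B * X * Aᴴ = (A * X * Bᴴ)ᴴ := by
    simp only [conjTranspose_mul, conjTranspose_conjTranspose, hX.isHermitian.eq,
      Matrix.mul_assoc]
  have h := (PosDef.fromBlocks₂₂ _ _ hD).1 (hBA ▸ hX.fromBlocks_mul_mul_conjTranspose_add_one A B)
  rw [← hBA] at h
  simpa only [Matrix.mul_assoc] using h

end PosSemidef

lemma PosDef.posSemidef_fromBlocks_mul_inv_mul_conjTranspose {𝕜 : Type*} [RCLike 𝕜]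
    {m k : Type*} [Fintype m] [Fintype k] [DecidableEq k] {D : Matrix k k 𝕜} (hD : D.PosDef)
    (C : Matrix m k 𝕜) : (fromBlocks (C * D⁻¹ * Cᴴ) C Cᴴ D).PosSemidef := by
  have : Invertible D := hD.isUnit.invertible
  rw [PosDef.fromBlocks₂₂ _ _ hD, sub_self]
  exact .zero

end Matrix

/-- achievability direction of Lemma 1 of the paper: the choice
`Y = F(X)` is feasible for the linear matrix inequality and attains the
secrecy-rate determinant ratio. -/
theorem stmt_4 {Nr Nt Ne : ℕ}
    (Hb : Matrix (Fin Nr) (Fin Nt) ℂ) (He : Matrix (Fin Ne) (Fin Nt) ℂ)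
    (X : Matrix (Fin Nt) (Fin Nt) ℂ) (hX : X.PosSemidef)
    (hΔ : (Hbᴴ * Hb - Heᴴ * He).PosSemidef)
    (Y : Matrix (Fin Nt) (Fin Nt) ℂ)
    (hY : Y = 1 + hΔ.sqrt * X * hΔ.sqrt
        - hΔ.sqrt * X * Heᴴ * (1 + He * X * Heᴴ)⁻¹ * He * X * hΔ.sqrt) :
    (Y - 1).PosSemidef ∧ Y.PosDef ∧
    (Matrix.fromBlocks
        (1 + hΔ.sqrt * X * hΔ.sqrt - Y) (hΔ.sqrt * X * Heᴴ)
        (He * X * hΔ.sqrt) (1 + He * X * Heᴴ)).PosSemidef ∧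
    Y.det = (1 + Hb * X * Hbᴴ).det / (1 + He * X * Heᴴ).det := by
  set S := hΔ.sqrt
  have hSh : Sᴴ = S := hΔ.posSemidef_sqrt.isHermitian.eq
  have hSS : Sᴴ * S + Heᴴ * He = Hbᴴ * Hb := by rw [hSh, hΔ.sqrt_mul_self, sub_add_cancel]
  have hD := hX.posDef_one_add_mul_mul_conjTranspose He
  have hY' : Y = 1 + S * X * Sᴴ - S * X * Heᴴ * (1 + He * X * Heᴴ)⁻¹ * He * X * Sᴴ := by
    rw [hY, hSh]
  have hY1 : (Y - 1).PosSemidef := by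
    rw [hY', add_sub_assoc, add_sub_cancel_left]
    exact hX.mul_mul_conjTranspose_sub S He
  refine ⟨hY1, by simpa using PosDef.posSemidef_add hY1 PosDef.one, ?_, ?_⟩
  · have hC : (S * X * Heᴴ)ᴴ = He * X * S := by
      simp only [conjTranspose_mul, conjTranspose_conjTranspose, hX.isHermitian.eq, hSh,
        Matrix.mul_assoc]
    have h11 : 1 + S * X * S - Y = S * X * Heᴴ * (1 + He * X * Heᴴ)⁻¹ * (S * X * Heᴴ)ᴴ := by
      rw [hY, hC]
      simp only [Matrix.mul_assoc]
      abel
    rw [h11, ← hC]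
    exact hD.posSemidef_fromBlocks_mul_inv_mul_conjTranspose _
  · rw [hY']
    exact det_one_add_mul_sub_mul_inv_mul_conjTranspose X S He Hb hSS hD.det_pos.ne'
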